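/- For the root system C_3 with the convex order on positive roots induced by the reduced decomposition w₀ = s₃(s₂s₃s₂)(s₁s₂s₃s₂s₁), the radical roots (for the cominuscule parabolic defined by α₃) are enumerated ξ₁ = α₃, ξ₂ = α₂+α₃, ξ₃ = 2α₂+α₃, ξ₄ = α₁+2α₂+α₃, ξ₅ = α₁+α₂+α₃, ξ₆ = 2α₁+2α₂+α₃, and they satisfy ξ₄ − ξ₂ = ξ₅ − ξ₁ with 4 > 2, 5 > 4, 1 < 2; hence there exist i > j and radical roots ξ > ξ_i, ξ′ < ξ_j with ξ_i − ξ_j = ξ − ξ′ a nontrivial relation of the forbidden type. -/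

import Mathlib

/-- The simple reflection `s_i` acting on simple-root coordinates: `s_i β = β − ⟨β, α_i^∨⟩ α_i`,
where `A j i = ⟨α_j, α_i^∨⟩` is the Cartan matrix of `g`. -/
def sref {ι : Type*} [Fintype ι] [DecidableEq ι] (A : ι → ι → ℤ) (i : ι) (c : ι → ℤ) :
    ι → ℤ :=
  fun k => if k = i then c i - ∑ j, c j * A j i else c k

/-- The action of a word in the simple reflections: `act A [i₁,…,iₘ] = s_{i₁} ∘ ⋯ ∘ s_{iₘ}`. -/
def act {ι : Type*} [Fintype ι] [DecidableEq ι] (A : ι → ι → ℤ) : List ι → (ι → ℤ) → (ι → ℤ)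
  | [], c => c
  | i :: l, c => sref A i (act A l c)

/-- The Cartan pairing matrix of `C₃` (with `α₃` the long simple root):
`CartanC3 j i = ⟨α_j, α_i^∨⟩`. -/
def CartanC3 : Fin 3 → Fin 3 → ℤ :=
  ![![2, -1, 0], ![-1, 2, -1], ![0, -2, 2]]

/-- The reduced word `w₀ = s₃ (s₂ s₃ s₂) (s₁ s₂ s₃ s₂ s₁)` (zero-indexed). -/
def wordC3 : Fin 9 → Fin 3 := ![2, 1, 2, 1, 0, 1, 2, 1, 0]

/-- The positive roots of `C₃` in the convex order induced by `w₀ = s₃s₂s₃s₂s₁s₂s₃s₂s₁`,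
written as coefficient vectors over the simple roots `α₁, α₂, α₃`. -/
def eC3 : Fin 9 → Fin 3 → ℤ :=
  ![![0, 0, 1], ![0, 1, 1], ![0, 2, 1], ![0, 1, 0], ![1, 2, 1],
    ![1, 1, 1], ![2, 2, 1], ![1, 1, 0], ![1, 0, 0]]

theorem eC3_eq_act_take_wordC3 (k : Fin 9) :
    eC3 k = act CartanC3 ((List.ofFn wordC3).take k) (Pi.single (wordC3 k) 1) := by
  revert k
  decide

theorem eC3_apply_two_eq_one_iff (k : Fin 9) :
    eC3 k 2 = 1 ↔ (k : ℕ) ∈ ({0, 1, 2, 4, 5, 6} : Set ℕ) := by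
  simp only [Set.mem_insert_iff, Set.mem_singleton_iff]
  revert k
  decide

theorem eC3_four_sub_one_eq_five_sub_zero : eC3 4 - eC3 1 = eC3 5 - eC3 0 := by
  decide

/-- For `C₃` with the convex order induced by the reduced decomposition
`w₀ = s₃(s₂s₃s₂)(s₁s₂s₃s₂s₁)`, the radical roots of the cominuscule parabolic defined by `α₃`
are enumerated as `ξ₁ = α₃ < ξ₂ = α₂+α₃ < ξ₃ = 2α₂+α₃ < ξ₄ = α₁+2α₂+α₃ < ξ₅ = α₁+α₂+α₃ <
ξ₆ = 2α₁+2α₂+α₃`, they satisfy `ξ₄ − ξ₂ = ξ₅ − ξ₁`, and hence there are indices `i > j` and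
radical roots `ξ > ξ_i`, `ξ′ < ξ_j` with `ξ_i − ξ_j = ξ − ξ′`: a relation of the forbidden
type. -/
theorem C3_counterexample :
    -- the enumeration comes from the reduced decomposition via β_k = s_{i₁}⋯s_{i_{k−1}}(α_{i_k}):
    (∀ k : Fin 9, eC3 k = act CartanC3 ((List.ofFn wordC3).take k) (Pi.single (wordC3 k) 1))
    -- the radical roots (α₃-coefficient 1) appear in the order ξ₁,…,ξ₆ at positions 0,1,2,4,5,6:
    ∧ (∀ k : Fin 9, eC3 k 2 = 1 ↔ (k : ℕ) ∈ ({0, 1, 2, 4, 5, 6} : Set ℕ))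
    ∧ eC3 0 = ![0, 0, 1] ∧ eC3 1 = ![0, 1, 1] ∧ eC3 2 = ![0, 2, 1]
    ∧ eC3 4 = ![1, 2, 1] ∧ eC3 5 = ![1, 1, 1] ∧ eC3 6 = ![2, 2, 1]
    -- ξ₄ − ξ₂ = ξ₅ − ξ₁:
    ∧ eC3 4 - eC3 1 = eC3 5 - eC3 0
    -- hence a relation of the forbidden type exists:
    ∧ ∃ i j : Fin 9, j < i ∧ eC3 i 2 = 1 ∧ eC3 j 2 = 1 ∧
        ∃ k l : Fin 9, i < k ∧ l < j ∧ eC3 k 2 = 1 ∧ eC3 l 2 = 1 ∧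
          eC3 i - eC3 j = eC3 k - eC3 l := by
  refine ⟨eC3_eq_act_take_wordC3, eC3_apply_two_eq_one_iff, rfl, rfl, rfl, rfl, rfl, rfl,
    eC3_four_sub_one_eq_five_sub_zero, ?_⟩
  -- positions are zero-indexed: ξ₄, ξ₂, ξ₅, ξ₁ sit at 4, 1, 5, 0
  exact ⟨4, 1, by decide, rfl, rfl, 5, 0, by decide, by decide, rfl, rfl,
    eC3_four_sub_one_eq_five_sub_zero⟩
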